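/- arXiv:2012.11564 — 3 statements merged into one kernel-verified Lean document; each statement's English description precedes it below -/
import Mathlib

section
/- The q-Hahn weights are stochastic: for every nonnegative integer k, the sum over p from 0 to k of φ(p|k) equals 1, where φ(p|k) = binom(k,p)_{q²} · μ^p · (μ;q²)_{k-p} · (ν/μ;q²)_p / (ν;q²)_k. -/
/-- The q²-deformed integer `[n]_{q²} = (1 - q^{2n})/(1 - q²)`. -/
noncomputable def qint {K : Type*} [Field K] (q : K) (n : ℕ) : K :=
  (1 - q ^ (2 * n)) / (1 - q ^ 2)

/-- The q²-deformed factorial. -/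
noncomputable def qfact {K : Type*} [Field K] (q : K) : ℕ → K
  | 0 => 1
  | n + 1 => qfact q n * qint q (n + 1)

/-- The Gaussian binomial coefficient `binom(n,m)_{q²}`. -/
noncomputable def qbinom {K : Type*} [Field K] (q : K) (n m : ℕ) : K :=
  qfact q n / (qfact q m * qfact q (n - m))

/-- The q-Pochhammer symbol `(a;q²)_n = ∏_{j=0}^{n-1} (1 - a q^{2j})`. -/
noncomputable def qpoch {K : Type*} [Field K] (q a : K) (n : ℕ) : K :=
  ∏ j ∈ Finset.range n, (1 - a * q ^ (2 * j))

section Aux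
variable {K : Type*} [Field K] (q : K)

lemma qpoch_succ (a : K) (n : ℕ) :
    qpoch q a (n + 1) = qpoch q a n * (1 - a * q ^ (2 * n)) := by
  simp [qpoch, Finset.prod_range_succ]

lemma qfact_ne_zero (hint : ∀ n : ℕ, 1 ≤ n → qint q n ≠ 0) (n : ℕ) :
    qfact q n ≠ 0 := by
  induction n with
  | zero => simp [qfact]
  | succ m ih => exact mul_ne_zero ih (hint (m + 1) (by omega))

lemma qbinom_zero (hint : ∀ n : ℕ, 1 ≤ n → qint q n ≠ 0) (n : ℕ) :
    qbinom q n 0 = 1 := by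
  simp [qbinom, qfact, div_self (qfact_ne_zero q hint n)]

lemma qbinom_self (hint : ∀ n : ℕ, 1 ≤ n → qint q n ≠ 0) (n : ℕ) :
    qbinom q n n = 1 := by
  simp [qbinom, qfact, div_self (qfact_ne_zero q hint n)]

lemma qint_add (hq : q ^ 2 ≠ 1) (a b : ℕ) :
    qint q (a + b) = qint q a + q ^ (2 * a) * qint q b := by
  have h2 : (1 : K) - q ^ 2 ≠ 0 := sub_ne_zero.mpr (fun h => hq h.symm)
  unfold qint
  field_simp
  ring

lemma qpascal (hq : q ^ 2 ≠ 1) (hint : ∀ n : ℕ, 1 ≤ n → qint q n ≠ 0) (p m : ℕ) :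
    qbinom q (p + m + 2) (p + 1)
      = qbinom q (p + m + 1) (p + 1) + q ^ (2 * (m + 1)) * qbinom q (p + m + 1) p := by
  have hfp := qfact_ne_zero q hint p
  have hfm := qfact_ne_zero q hint m
  have hfn := qfact_ne_zero q hint (p + m + 1)
  have hip := hint (p + 1) (by omega)
  have him := hint (m + 1) (by omega)
  have e1 : qfact q (p + m + 2) = qfact q (p + m + 1) * qint q (p + m + 2) := rfl
  have e2 : qfact q (p + 1) = qfact q p * qint q (p + 1) := rfl
  have e3 : qfact q (m + 1) = qfact q m * qint q (m + 1) := rfl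
  have key : qint q (p + m + 2) = qint q (m + 1) + q ^ (2 * (m + 1)) * qint q (p + 1) := by
    have := qint_add q hq (m + 1) (p + 1)
    rw [show m + 1 + (p + 1) = p + m + 2 by omega] at this
    exact this
  unfold qbinom
  rw [show p + m + 2 - (p + 1) = m + 1 by omega, show p + m + 1 - (p + 1) = m by omega,
    show p + m + 1 - p = m + 1 by omega, e1, e2, e3]
  field_simp
  linear_combination key

end Aux

section Main
variable {K : Type*} [Field K]

lemma qHahn_key (q μ ν : K) (hq : q ^ 2 ≠ 1) (hint : ∀ n : ℕ, 1 ≤ n → qint q n ≠ 0)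
    (hμ : μ ≠ 0) :
    ∀ k : ℕ, ∑ p ∈ Finset.range (k + 1),
      qbinom q k p * μ ^ p * qpoch q μ (k - p) * qpoch q (ν / μ) p = qpoch q ν k := by
  intro k
  induction k with
  | zero => simp [qpoch, qbinom, qfact]
  | succ k ih =>
    set f : ℕ → K := fun p => qbinom q (k + 1) p * μ ^ p * qpoch q μ (k + 1 - p) *
      qpoch q (ν / μ) p with hf
    set A : ℕ → K := fun p => qbinom q k p * μ ^ p * qpoch q μ (k - p) *
      qpoch q (ν / μ) p with hA
    set C1 : ℕ → K := fun p => qbinom q k p * μ ^ p * qpoch q μ (k + 1 - p) *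
      qpoch q (ν / μ) p with hC1
    set C2 : ℕ → K := fun p => q ^ (2 * (k - p)) * qbinom q k p * μ ^ (p + 1) *
      qpoch q μ (k - p) * qpoch q (ν / μ) (p + 1) with hC2
    have hb0 := qbinom_zero q hint
    have hbs := qbinom_self q hint
    -- per-index combination: C1 p + C2 p = (1 - ν q^{2k}) A p for p ≤ k
    have hcomb : ∀ p ≤ k, C1 p + C2 p = (1 - ν * q ^ (2 * k)) * A p := by
      intro p hp
      have h1 : k + 1 - p = (k - p) + 1 := by omega
      have hqq : q ^ (2 * (k - p)) * q ^ (2 * p) = q ^ (2 * k) := by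
        rw [← pow_add]; congr 1; omega
      simp only [hC1, hC2, hA, h1, qpoch_succ, div_mul_eq_mul_div]
      field_simp
      linear_combination (-(qbinom q k p * μ ^ p * qpoch q μ (k - p) * qpoch q (ν / μ) p * μ * ν)) * hqq
    -- split of f at interior indices
    have hsplit : ∀ p < k, f (p + 1) = C1 (p + 1) + C2 p := by
      intro p hp
      have hpas := qpascal q hq hint p (k - p - 1)
      rw [show p + (k - p - 1) + 2 = k + 1 by omega, show p + (k - p - 1) + 1 = k by omega,
        show k - p - 1 + 1 = k - p by omega] at hpas
      simp only [hf, hC1, hC2, hpas, show k + 1 - (p + 1) = k - p by omega,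
        qpoch_succ, pow_succ]
      ring
    have step1 : ∑ p ∈ Finset.range (k + 2), f p
        = ∑ p ∈ Finset.range (k + 1), (C1 p + C2 p) := by
      rw [Finset.sum_range_succ, Finset.sum_range_succ']
      rw [Finset.sum_congr rfl (fun p hp => hsplit p (Finset.mem_range.mp hp))]
      rw [Finset.sum_add_distrib, Finset.sum_add_distrib, Finset.sum_range_succ',
        Finset.sum_range_succ]
      have hf0 : f 0 = C1 0 := by simp [hf, hC1, hb0]
      have hftop : f (k + 1) = C2 k := by
        simp [hf, hC2, hbs]
      rw [hf0, hftop]; ring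
    rw [step1, Finset.sum_congr rfl (fun p hp => hcomb p (by
      have := Finset.mem_range.mp hp; omega)), ← Finset.mul_sum, ih, qpoch_succ]
    ring

end Main

/-- The q-Hahn weights `φ(p|k) = binom(k,p)_{q²} μ^p (μ;q²)_{k-p} (ν/μ;q²)_p / (ν;q²)_k`
are stochastic: they sum to 1 over `p = 0, …, k`. -/
theorem qHahn_weights_sum_to_one {K : Type*} [Field K] (q μ ν : K)
    (hq : q ^ 2 ≠ 1) (hint : ∀ n : ℕ, 1 ≤ n → qint q n ≠ 0)
    (hμ : μ ≠ 0) (k : ℕ) (hν : qpoch q ν k ≠ 0) :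
    ∑ p ∈ Finset.range (k + 1),
      qbinom q k p * μ ^ p * qpoch q μ (k - p) * qpoch q (ν / μ) p / qpoch q ν k = 1 := by
  rw [← Finset.sum_div, qHahn_key q μ ν hq hint hμ k, div_self hν]
end

section
/- In an algebra with elements σᵢ satisfying the Hecke relation σᵢ² = (q-q⁻¹)σᵢ + 1, the elements Ř_i(u) := σᵢ - (q-q⁻¹)/(1-u), together with the braid relations on the σᵢ, satisfy the braided Yang–Baxter equation with multiplicative spectral parameters: Řᵢ(u)Řᵢ₊₁(uv)Řᵢ(v) = Řᵢ₊₁(v)Řᵢ(uv)Řᵢ₊₁(u). -/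
/-- Baxterisation of the Hecke algebra: if `a = σᵢ`, `b = σᵢ₊₁` satisfy the Hecke
relation `σ² = (q-q⁻¹)σ + 1` and the braid relation, then
`Řᵢ(u) := σᵢ - ((q-q⁻¹)/(1-u))·1` satisfies the braided Yang–Baxter equation
`Řᵢ(u)Řᵢ₊₁(uv)Řᵢ(v) = Řᵢ₊₁(v)Řᵢ(uv)Řᵢ₊₁(u)`. -/
theorem hecke_baxterisation_YBE {K : Type*} [Field K] {A : Type*} [Ring A] [Algebra K A]
    (q u v : K) (hu : u ≠ 1) (hv : v ≠ 1) (huv : u * v ≠ 1)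
    (a b : A)
    (ha : a ^ 2 = (q - q⁻¹) • a + 1)
    (hb : b ^ 2 = (q - q⁻¹) • b + 1)
    (hbr : a * b * a = b * a * b) :
    (a - ((q - q⁻¹) / (1 - u)) • (1 : A)) *
        (b - ((q - q⁻¹) / (1 - u * v)) • (1 : A)) *
        (a - ((q - q⁻¹) / (1 - v)) • (1 : A)) =
      (b - ((q - q⁻¹) / (1 - v)) • (1 : A)) *
        (a - ((q - q⁻¹) / (1 - u * v)) • (1 : A)) *
        (b - ((q - q⁻¹) / (1 - u)) • (1 : A)) := by
  have hu' : (1 : K) - u ≠ 0 := sub_ne_zero.mpr (Ne.symm hu)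
  have hv' : (1 : K) - v ≠ 0 := sub_ne_zero.mpr (Ne.symm hv)
  have huv' : (1 : K) - u * v ≠ 0 := sub_ne_zero.mpr (Ne.symm huv)
  have ha' : a * a = (q - q⁻¹) • a + 1 := by rw [← sq]; exact ha
  have hb' : b * b = (q - q⁻¹) • b + 1 := by rw [← sq]; exact hb
  simp only [sub_mul, mul_sub, smul_mul_assoc, mul_smul_comm, one_mul, mul_one, smul_smul,
    mul_assoc]
  rw [ha', hb']
  rw [← mul_assoc a b a, hbr]
  simp only [mul_assoc]
  match_scalars <;> generalize q - q⁻¹ = r <;> field_simp <;> ring_nf <;> field_simp <;> ring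
end

section
/- In an algebra with elements σ̊ᵢ satisfying σ̊ᵢ² = (1-q²)σ̊ᵢ + q² and the braid relations, the stochastic R-elements R̊ᵢ(u) := ((1-u)/(q²-u))·σ̊ᵢ + (q²-1)/(q²-u) satisfy the braided Yang–Baxter equation R̊ᵢ(u)R̊ᵢ₊₁(uv)R̊ᵢ(v) = R̊ᵢ₊₁(v)R̊ᵢ(uv)R̊ᵢ₊₁(u), and the two coefficients of R̊ᵢ(u) sum to 1. -/
theorem stochastic_baxterisation_key {K : Type*} [Field K] {A : Type*} [Ring A] [Algebra K A]
    (q u v : K)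
    (a b : A)
    (ha : a ^ 2 = (1 - q ^ 2) • a + (q ^ 2) • (1 : A))
    (hb : b ^ 2 = (1 - q ^ 2) • b + (q ^ 2) • (1 : A))
    (hbr : a * b * a = b * a * b) :
    ((1-u)•a + (q^2-1)•(1:A)) * ((1-u*v)•b + (q^2-1)•(1:A)) * ((1-v)•a + (q^2-1)•(1:A)) =
    ((1-v)•b + (q^2-1)•(1:A)) * ((1-u*v)•a + (q^2-1)•(1:A)) * ((1-u)•b + (q^2-1)•(1:A)) := by
  have ha' : a * a = (1 - q ^ 2) • a + (q ^ 2) • (1 : A) := by rw [← sq]; exact ha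
  have hb' : b * b = (1 - q ^ 2) • b + (q ^ 2) • (1 : A) := by rw [← sq]; exact hb
  simp only [mul_add, add_mul, smul_mul_smul_comm, mul_one, one_mul, smul_mul_assoc,
    mul_smul_comm, smul_smul, mul_assoc]
  rw [show a * (b * a) = b * (a * b) by rw [← mul_assoc, hbr, mul_assoc]]
  simp only [ha', hb', smul_add, smul_smul]
  match_scalars <;> ring

/-- Stochastic Baxterisation: if `a = σ̊ᵢ`, `b = σ̊ᵢ₊₁` satisfy the stochastic Hecke
relation `σ̊² = (1-q²)σ̊ + q²` and the braid relation, then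
`R̊ᵢ(w) := ((1-w)/(q²-w))σ̊ᵢ + ((q²-1)/(q²-w))·1` satisfies the braided Yang–Baxter
equation `R̊ᵢ(u)R̊ᵢ₊₁(uv)R̊ᵢ(v) = R̊ᵢ₊₁(v)R̊ᵢ(uv)R̊ᵢ₊₁(u)`, and the two coefficients
of `R̊ᵢ(u)` sum to 1. -/
theorem stochastic_baxterisation_YBE {K : Type*} [Field K] {A : Type*} [Ring A] [Algebra K A]
    (q u v : K) (hu : q ^ 2 - u ≠ 0) (hv : q ^ 2 - v ≠ 0) (huv : q ^ 2 - u * v ≠ 0)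
    (a b : A)
    (ha : a ^ 2 = (1 - q ^ 2) • a + (q ^ 2) • (1 : A))
    (hb : b ^ 2 = (1 - q ^ 2) • b + (q ^ 2) • (1 : A))
    (hbr : a * b * a = b * a * b) :
    (((1 - u) / (q ^ 2 - u)) • a + ((q ^ 2 - 1) / (q ^ 2 - u)) • (1 : A)) *
        (((1 - u * v) / (q ^ 2 - u * v)) • b + ((q ^ 2 - 1) / (q ^ 2 - u * v)) • (1 : A)) *
        (((1 - v) / (q ^ 2 - v)) • a + ((q ^ 2 - 1) / (q ^ 2 - v)) • (1 : A)) =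
      (((1 - v) / (q ^ 2 - v)) • b + ((q ^ 2 - 1) / (q ^ 2 - v)) • (1 : A)) *
        (((1 - u * v) / (q ^ 2 - u * v)) • a + ((q ^ 2 - 1) / (q ^ 2 - u * v)) • (1 : A)) *
        (((1 - u) / (q ^ 2 - u)) • b + ((q ^ 2 - 1) / (q ^ 2 - u)) • (1 : A)) ∧
    (1 - u) / (q ^ 2 - u) + (q ^ 2 - 1) / (q ^ 2 - u) = 1 := by
  constructor
  · have h1 : ∀ (w : K) (x : A), ((1 - w) / (q ^ 2 - w)) • x + ((q ^ 2 - 1) / (q ^ 2 - w)) • (1 : A)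
        = (q ^ 2 - w)⁻¹ • ((1 - w) • x + (q ^ 2 - 1) • (1 : A)) := by
      intro w x
      rw [smul_add, smul_smul, smul_smul, inv_mul_eq_div, inv_mul_eq_div]
    rw [h1 u a, h1 (u*v) b, h1 v a, h1 v b, h1 (u*v) a, h1 u b]
    simp only [smul_mul_assoc, mul_smul_comm, smul_smul]
    rw [stochastic_baxterisation_key q u v a b ha hb hbr]
    congr 1
    ring
  · field_simp
    ring
end
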